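/- Let $X_N$ be the random lower triangular matrix whose entries on and below the diagonal are i.i.d., each equal to $\frac{1}{\delta(N)\,N}$ with probability $\delta(N)$ and $0$ otherwise, with $\delta(N) = N^{-d}$ for some fixed $0 < d < 1$. Then for all $u, v \in L^2[0,1]$, almost surely $\langle W_N X_N W_N^*(u), v\rangle \to \langle V(u), v\rangle$ as $N \to \infty$. -/

import Mathlib

open MeasureTheory ProbabilityTheory Filter

noncomputable section

/-- Lebesgue measure restricted to the unit interval `[0,1]`. -/
def μ01 : Measure ℝ := volume.restrict (Set.Icc (0:ℝ) 1)

instance : IsFiniteMeasure μ01 :=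
  ⟨by
    simp only [μ01, Measure.restrict_apply_univ]
    simp [Real.volume_Icc]⟩

/-- The function `e_i^N = √N · 𝟙_{[i/N,(i+1)/N]}` as an element of `L²[0,1]`
(here `i : Fin N` runs over `0, …, N-1`, corresponding to `1, …, N` in the paper). -/
def eN (N : ℕ) (i : Fin N) : Lp ℂ 2 μ01 :=
  indicatorConstLp 2 (measurableSet_Icc :
      MeasurableSet (Set.Icc ((i : ℝ) / N) (((i : ℝ) + 1) / N)))
    (measure_ne_top μ01 _) ((Real.sqrt N : ℝ) : ℂ)

/-- The isometry `W_N : ℂ^N → L²[0,1]`, `(a_1,…,a_N) ↦ ∑ a_i e_i^N`. -/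
def Wmap (N : ℕ) (a : EuclideanSpace ℂ (Fin N)) : Lp ℂ 2 μ01 :=
  ∑ i : Fin N, a i • eN N i

/-- The adjoint `W_N^* : L²[0,1] → ℂ^N`, `f ↦ (⟨f,e_1^N⟩, …, ⟨f,e_N^N⟩)`
(recall that Mathlib's inner product is conjugate-linear in the *first* slot,
so the paper's `⟨f, e⟩` is `inner e f`). -/
def Wstar (N : ℕ) (f : Lp ℂ 2 μ01) : EuclideanSpace ℂ (Fin N) :=
  (WithLp.equiv 2 (Fin N → ℂ)).symm fun i => @inner ℂ _ _ (eN N i) f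

/-- The deterministic lower-triangular matrix `T_N` whose entries on and below
the diagonal all equal `1/N`. -/
def TM (N : ℕ) : Matrix (Fin N) (Fin N) ℂ :=
  Matrix.of fun i j => if j ≤ i then ((N : ℂ))⁻¹ else 0

/-- Real-valued version of `T_N`. -/
def TMr (N : ℕ) : Matrix (Fin N) (Fin N) ℝ :=
  Matrix.of fun i j => if j ≤ i then ((N : ℝ))⁻¹ else 0

/-- The random matrix `X_N(ω) = (1/N)(X_{i,j}(ω))_{i,j}` (complex-valued version;
the hypothesis that the entries above the diagonal vanish is imposed separately). -/
def XM {Ω : Type*} (N : ℕ) (X : Fin N → Fin N → Ω → ℝ) (ω : Ω) :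
    Matrix (Fin N) (Fin N) ℂ :=
  Matrix.of fun i j => ((N : ℂ))⁻¹ * (X i j ω : ℂ)

/-- The random matrix `X_N(ω) = (1/N)(X_{i,j}(ω))_{i,j}` (real-valued version). -/
def XMr {Ω : Type*} (N : ℕ) (X : Fin N → Fin N → Ω → ℝ) (ω : Ω) :
    Matrix (Fin N) (Fin N) ℝ :=
  Matrix.of fun i j => ((N : ℝ))⁻¹ * X i j ω

/-- A matrix acting as an operator on `ℂ^N` (with its euclidean structure). -/
def matVec {N : ℕ} (M : Matrix (Fin N) (Fin N) ℂ) (u : EuclideanSpace ℂ (Fin N)) :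
    EuclideanSpace ℂ (Fin N) :=
  Matrix.toEuclideanLin M u

/-- The index set of the (closed) lower triangle of an `N × N` matrix. -/
def LTri (N : ℕ) : Type := {p : Fin N × Fin N // p.2 ≤ p.1}

/-- `V : L²[0,1] → L²[0,1]` is the Volterra operator: `V(f)(x) = ∫_0^x f(t) dt`. -/
def IsVolterra (V : Lp ℂ 2 μ01 → Lp ℂ 2 μ01) : Prop :=
  ∀ f : Lp ℂ 2 μ01, ∀ᵐ x ∂μ01, (V f : ℝ → ℂ) x = ∫ t in (0:ℝ)..x, (f : ℝ → ℂ) t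

/-!
Write `a_j = ⟪e_j, u⟫` and `b_i = ⟪v, e_i⟫`, so that `⟪v, W_N M W_N^* u⟫ = ∑ M_{ij} a_j b_i`.
The entries of `N X_N` have mean `1` on the lower triangle, so the pairing splits into the
deterministic term with `T_N` and a sum of independent centred terms. The deterministic term is
a Riemann sum for `∫₀¹ conj v · U` with `U x = ∫₀ˣ u`; as `U` is `1/2`-Hölder with constant `‖u‖`
(Cauchy–Schwarz), the error is at most `‖u‖ ‖v‖₁ / √N`. The noise has second moment at most
`N^d ∑ |a_j b_i|² / N² ≤ ‖u‖² ‖v‖² N^(d-2)` by Bessel's inequality, which is summable since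
`d < 1`, so it tends to `0` almost surely.
-/

open scoped InnerProductSpace ComplexConjugate

section RiemannSum

open Finset intervalIntegral

lemma norm_sum_integral_mul_sub_integral_mul_le {g F : ℝ → ℂ} {a : ℕ → ℝ} {n : ℕ}
    (ha : Monotone a) (hg : IntervalIntegrable g volume (a 0) (a n))
    (hF : ContinuousOn F (Set.uIcc (a 0) (a n))) {ε : ℝ}
    (hε : ∀ k < n, ∀ x ∈ Set.Icc (a k) (a (k + 1)), ‖F (a (k + 1)) - F x‖ ≤ ε) :
    ‖∑ k ∈ range n, (∫ x in a k..a (k + 1), g x) * F (a (k + 1))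
        - ∫ x in a 0..a n, g x * F x‖ ≤ ε * ∫ x in a 0..a n, ‖g x‖ := by
  have hsub : ∀ k < n, Set.uIcc (a k) (a (k + 1)) ⊆ Set.uIcc (a 0) (a n) := fun k hk =>
    Set.uIcc_subset_uIcc (Set.mem_uIcc_of_le (ha k.zero_le) (ha hk.le))
      (Set.mem_uIcc_of_le (ha (k + 1).zero_le) (ha hk))
  have hg' : ∀ k < n, IntervalIntegrable g volume (a k) (a (k + 1)) :=
    fun k hk => hg.mono_set (hsub k hk)
  have hgF : ∀ k < n, IntervalIntegrable (fun x => g x * F x) volume (a k) (a (k + 1)) :=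
    fun k hk => (hg.mul_continuousOn hF).mono_set (hsub k hk)
  have hpiece : ∀ k < n, ‖(∫ x in a k..a (k + 1), g x) * F (a (k + 1))
      - ∫ x in a k..a (k + 1), g x * F x‖ ≤ ε * ∫ x in a k..a (k + 1), ‖g x‖ := by
    intro k hk
    rw [← intervalIntegral.integral_mul_const,
      ← intervalIntegral.integral_sub ((hg' k hk).mul_const _) (hgF k hk),
      ← intervalIntegral.integral_const_mul]
    refine norm_integral_le_of_norm_le (ha k.le_succ) (ae_of_all _ fun x hx => ?_)
      ((hg' k hk).norm.const_mul ε)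
    rw [← mul_sub, norm_mul, mul_comm]
    exact mul_le_mul_of_nonneg_right (hε k hk x (Set.mem_Icc_of_Ioc hx)) (norm_nonneg _)
  rw [← sum_integral_adjacent_intervals hgF,
    ← sum_integral_adjacent_intervals fun k hk => (hg' k hk).norm, mul_sum, ← sum_sub_distrib]
  exact (norm_sum_le _ _).trans (sum_le_sum fun k hk => hpiece k (mem_range.mp hk))

end RiemannSum

lemma Fin.sum_ite_le_eq_sum_range {M : Type*} [AddCommMonoid M] {N : ℕ} (i : Fin N)
    (g : ℕ → M) : ∑ j : Fin N, (if j ≤ i then g j else 0) = ∑ k ∈ Finset.range (i + 1), g k := by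
  simp_rw [Fin.le_def]
  rw [Fin.sum_univ_eq_sum_range (fun k => if k ≤ (i : ℕ) then g k else 0), ← Finset.sum_filter]
  congr 1
  ext k
  simp only [Finset.mem_filter, Finset.mem_range]
  omega

section Independent

open Finset

variable {Ω ι : Type*} [MeasurableSpace Ω] {μ : Measure Ω} [IsFiniteMeasure μ] [Fintype ι]
  {X : ι → Ω → ℝ}

lemma integral_sq_sum_mul_sub_integral (hX : ∀ p, MemLp (X p) 2 μ)
    (hindep : Pairwise fun p q => IndepFun (X p) (X q) μ) (a : ι → ℝ) :
    ∫ ω, (∑ p, a p * (X p ω - μ[X p])) ^ 2 ∂μ = ∑ p, a p ^ 2 * Var[X p; μ] := by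
  have hvar := IndepFun.variance_sum (μ := μ) (s := univ) (X := fun p ω => a p * X p ω)
    (fun p _ => (hX p).const_mul (a p)) fun p _ q _ hpq =>
      (hindep hpq).comp (measurable_const_mul (a p)) (measurable_const_mul (a q))
  simp only [variance_const_mul] at hvar
  rw [← hvar, variance_eq_integral (aemeasurable_sum _ fun p _ =>
    ((hX p).const_mul (a p)).aemeasurable)]
  refine integral_congr_ae (ae_of_all _ fun ω => ?_)
  simp only [Finset.sum_apply]
  rw [integral_finsetSum _ fun p _ => ((hX p).const_mul (a p)).integrable one_le_two]
  simp only [integral_const_mul, ← sum_sub_distrib, mul_sub]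

lemma memLp_sum_mul_sub_integral (hX : ∀ p, MemLp (X p) 2 μ) (c : ι → ℂ) :
    MemLp (fun ω => ∑ p, c p * ((X p ω - μ[X p] : ℝ) : ℂ)) 2 μ :=
  memLp_finsetSum _ fun p _ => ((hX p).sub (memLp_const _)).ofReal.const_mul (c p)

lemma integral_norm_sq_sum_mul_sub_integral (hX : ∀ p, MemLp (X p) 2 μ)
    (hindep : Pairwise fun p q => IndepFun (X p) (X q) μ) (c : ι → ℂ) :
    ∫ ω, ‖∑ p, c p * ((X p ω - μ[X p] : ℝ) : ℂ)‖ ^ 2 ∂μ = ∑ p, ‖c p‖ ^ 2 * Var[X p; μ] := by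
  have hsq (a : ι → ℝ) : Integrable (fun ω => (∑ p, a p * (X p ω - μ[X p])) ^ 2) μ :=
    (memLp_finsetSum _ fun p _ => ((hX p).sub (memLp_const _)).const_mul (a p)).integrable_sq
  have hnorm : ∀ ω, ‖∑ p, c p * ((X p ω - μ[X p] : ℝ) : ℂ)‖ ^ 2
      = (∑ p, (c p).re * (X p ω - μ[X p])) ^ 2 + (∑ p, (c p).im * (X p ω - μ[X p])) ^ 2 := by
    intro ω
    rw [Complex.sq_norm, Complex.normSq_apply, Complex.re_sum, Complex.im_sum]
    simp [sq]
  simp_rw [hnorm]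
  rw [integral_add (hsq _) (hsq _), integral_sq_sum_mul_sub_integral hX hindep,
    integral_sq_sum_mul_sub_integral hX hindep, ← sum_add_distrib]
  refine sum_congr rfl fun p _ => ?_
  rw [Complex.sq_norm, Complex.normSq_apply]
  ring

end Independent

lemma ae_tendsto_zero_of_summable_integral_norm_sq {Ω E : Type*} [MeasurableSpace Ω]
    {μ : Measure Ω} [NormedAddCommGroup E] {Y : ℕ → Ω → E} (hY : ∀ n, MemLp (Y n) 2 μ)
    (hsum : Summable fun n => ∫ ω, ‖Y n ω‖ ^ 2 ∂μ) :
    ∀ᵐ ω ∂μ, Tendsto (fun n => Y n ω) atTop (nhds 0) := by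
  have hmeas n : AEMeasurable (fun ω => ENNReal.ofReal (‖Y n ω‖ ^ 2)) μ :=
    ((hY n).aestronglyMeasurable.norm.pow 2).aemeasurable.ennreal_ofReal
  have hfin : ∫⁻ ω, ∑' n, ENNReal.ofReal (‖Y n ω‖ ^ 2) ∂μ ≠ ⊤ := by
    rw [lintegral_tsum hmeas]
    simp_rw [← ofReal_integral_eq_lintegral_ofReal (hY _).norm.integrable_sq
      (ae_of_all _ fun _ => sq_nonneg _)]
    rw [← ENNReal.ofReal_tsum_of_nonneg (fun n => integral_nonneg fun _ => sq_nonneg _) hsum]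
    exact ENNReal.ofReal_ne_top
  filter_upwards [ae_lt_top' (AEMeasurable.tsum hmeas) hfin] with ω hω
  have hsq : Tendsto (fun n => ‖Y n ω‖ ^ 2) atTop (nhds 0) := by
    simpa [Function.comp_def] using (ENNReal.tendsto_toReal ENNReal.zero_ne_top).comp
      (ENNReal.tendsto_atTop_zero_of_tsum_ne_top hω.ne)
  rw [tendsto_zero_iff_norm_tendsto_zero]
  simpa [Real.sqrt_sq (norm_nonneg _)] using hsq.sqrt

theorem ae_tendsto_sum_mul_sub_integral {Ω : Type*} [MeasurableSpace Ω] {μ : Measure Ω}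
    [IsFiniteMeasure μ] {ι : ℕ → Type*} [∀ n, Fintype (ι n)] {X : ∀ n, ι n → Ω → ℝ}
    (hX : ∀ n p, MemLp (X n p) 2 μ)
    (hindep : ∀ n, Pairwise fun p q => IndepFun (X n p) (X n q) μ) (c : ∀ n, ι n → ℂ)
    (hsum : Summable fun n => ∑ p, ‖c n p‖ ^ 2 * Var[X n p; μ]) :
    ∀ᵐ ω ∂μ, Tendsto (fun n => ∑ p, c n p * ((X n p ω - μ[X n p] : ℝ) : ℂ)) atTop (nhds 0) :=
  ae_tendsto_zero_of_summable_integral_norm_sq (fun n => memLp_sum_mul_sub_integral (hX n) (c n))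
    (by simpa only [integral_norm_sq_sum_mul_sub_integral (hX _) (hindep _)] using hsum)

section TwoPoint

variable {Ω : Type*} [MeasurableSpace Ω] {μ : Measure Ω} {X : Ω → ℝ} {a : ℝ}

lemma memLp_of_forall_eq_or_eq_zero [IsFiniteMeasure μ] (hX : Measurable X)
    (h : ∀ ω, X ω = a ∨ X ω = 0) (p : ENNReal) : MemLp X p μ :=
  MemLp.of_bound hX.aestronglyMeasurable ‖a‖ (ae_of_all _ fun ω => by
    rcases h ω with h | h <;> simp [h])

lemma integral_comp_of_forall_eq_or_eq_zero (hX : Measurable X) (h : ∀ ω, X ω = a ∨ X ω = 0)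
    {g : ℝ → ℝ} (hg : g 0 = 0) : ∫ ω, g (X ω) ∂μ = μ.real {ω | X ω = a} * g a := by
  have hind : (fun ω => g (X ω)) = {ω | X ω = a}.indicator fun _ => g a := by
    ext ω
    rcases h ω with h | h <;> by_cases ha : X ω = a <;> simp_all
  rw [hind, integral_indicator_const (s := {ω | X ω = a}) _ (hX (measurableSet_singleton a)),
    smul_eq_mul]

lemma integral_eq_one_and_variance_le_rpow [IsProbabilityMeasure μ] {t d : ℝ} (ht : 0 < t)
    (hX : Measurable X) (h : ∀ ω, X ω = t ^ d ∨ X ω = 0)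
    (hprob : μ {ω | X ω = t ^ d} = ENNReal.ofReal (t ^ (-d))) :
    μ[X] = 1 ∧ Var[X; μ] ≤ t ^ d := by
  have hreal : μ.real {ω | X ω = t ^ d} = t ^ (-d) := by
    rw [measureReal_def, hprob, ENNReal.toReal_ofReal (Real.rpow_nonneg ht.le _)]
  constructor
  · simpa [hreal, ← Real.rpow_add ht] using
      integral_comp_of_forall_eq_or_eq_zero (μ := μ) (g := id) hX h rfl
  · refine (variance_le_expectation_sq hX.aestronglyMeasurable).trans_eq ?_
    change ∫ ω, X ω ^ 2 ∂μ = _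
    rw [integral_comp_of_forall_eq_or_eq_zero (g := (· ^ 2)) hX h (by simp), hreal,
      ← Real.rpow_natCast, ← Real.rpow_mul ht.le, ← Real.rpow_add ht]
    ring_nf

end TwoPoint

lemma grid_nonneg (N : ℕ) (i : Fin N) : 0 ≤ (i : ℝ) / N := by positivity

lemma grid_le_succ (N : ℕ) (i : Fin N) : (i : ℝ) / N ≤ ((i : ℝ) + 1) / N := by
  gcongr; linarith

lemma grid_succ_le_one (N : ℕ) (i : Fin N) : ((i : ℝ) + 1) / N ≤ 1 := by
  rw [div_le_one (by exact_mod_cast i.pos)]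
  exact_mod_cast i.isLt

lemma μ01_Icc {a b : ℝ} (h0 : 0 ≤ a) (h1 : b ≤ 1) :
    μ01 (Set.Icc a b) = ENNReal.ofReal (b - a) := by
  rw [μ01, Measure.restrict_apply measurableSet_Icc,
    Set.inter_eq_left.mpr (Set.Icc_subset_Icc h0 h1), Real.volume_Icc]

lemma setIntegral_Icc_μ01 (f : ℝ → ℂ) {a b : ℝ} (h0 : 0 ≤ a) (hab : a ≤ b) (h1 : b ≤ 1) :
    ∫ x in Set.Icc a b, f x ∂μ01 = ∫ x in a..b, f x := by
  rw [μ01, Measure.restrict_restrict measurableSet_Icc,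
    Set.inter_eq_left.mpr (Set.Icc_subset_Icc h0 h1), intervalIntegral.integral_of_le hab,
    integral_Icc_eq_integral_Ioc]

lemma integral_μ01 (f : ℝ → ℂ) : ∫ x, f x ∂μ01 = ∫ x in (0 : ℝ)..1, f x := by
  rw [μ01, intervalIntegral.integral_of_le zero_le_one, integral_Icc_eq_integral_Ioc]

lemma intervalIntegrable_Lp_μ01 (f : Lp ℂ 2 μ01) {a b : ℝ} (ha : a ∈ Set.Icc (0 : ℝ) 1)
    (hb : b ∈ Set.Icc (0 : ℝ) 1) : IntervalIntegrable f volume a b := by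
  have hf : IntegrableOn f (Set.Icc 0 1) := (Lp.memLp f).integrable one_le_two
  exact (hf.mono_set (Set.uIcc_subset_Icc ha hb)).intervalIntegrable

lemma norm_primitive_sub_le (f : Lp ℂ 2 μ01) {a b : ℝ} (h0 : 0 ≤ a) (hab : a ≤ b) (h1 : b ≤ 1) :
    ‖(∫ x in (0 : ℝ)..b, (f : ℝ → ℂ) x) - ∫ x in (0 : ℝ)..a, (f : ℝ → ℂ) x‖
      ≤ Real.sqrt (b - a) * ‖f‖ := by
  have hμ : μ01 (Set.Icc a b) ≠ ⊤ := measure_ne_top _ _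
  have h := norm_inner_le_norm (𝕜 := ℂ) (indicatorConstLp 2 measurableSet_Icc hμ (1 : ℂ)) f
  rw [L2.inner_indicatorConstLp_one, setIntegral_Icc_μ01 _ h0 hab h1,
    norm_indicatorConstLp two_ne_zero ENNReal.ofNat_ne_top, measureReal_def, μ01_Icc h0 h1,
    ENNReal.toReal_ofReal (sub_nonneg.mpr hab), norm_one, one_mul, ENNReal.toReal_ofNat,
    ← Real.sqrt_eq_rpow] at h
  have h01 : (0 : ℝ) ∈ Set.Icc (0 : ℝ) 1 := ⟨le_rfl, zero_le_one⟩
  rwa [intervalIntegral.integral_interval_sub_left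
    (intervalIntegrable_Lp_μ01 f h01 ⟨h0.trans hab, h1⟩)
    (intervalIntegrable_Lp_μ01 f h01 ⟨h0, hab.trans h1⟩)]

lemma inner_eN (N : ℕ) (i : Fin N) (f : Lp ℂ 2 μ01) :
    ⟪eN N i, f⟫_ℂ = Real.sqrt N * ∫ x in (i / N : ℝ)..((i + 1) / N), (f : ℝ → ℂ) x := by
  rw [eN, L2.inner_indicatorConstLp_eq_inner_setIntegral,
    setIntegral_Icc_μ01 _ (grid_nonneg N i) (grid_le_succ N i) (grid_succ_le_one N i)]
  simp [mul_comm]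

lemma inner_eN_right (N : ℕ) (i : Fin N) (f : Lp ℂ 2 μ01) :
    ⟪f, eN N i⟫_ℂ = Real.sqrt N * ∫ x in (i / N : ℝ)..((i + 1) / N), conj ((f : ℝ → ℂ) x) := by
  rw [← inner_conj_symm, inner_eN, map_mul, Complex.conj_ofReal,
    intervalIntegral.intervalIntegral_conj]

lemma eN_orthonormal (N : ℕ) : Orthonormal ℂ (eN N) := by
  rw [orthonormal_iff_ite]
  intro i j
  have hN : (0 : ℝ) < N := by exact_mod_cast i.pos
  rw [eN, eN, L2.inner_indicatorConstLp_indicatorConstLp, Set.Icc_inter_Icc]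
  split_ifs with hij
  · subst hij
    rw [max_self, min_self, measureReal_def, μ01_Icc (grid_nonneg N i) (grid_succ_le_one N i),
      ENNReal.toReal_ofReal (by linarith [grid_le_succ N i]), inner_self_eq_norm_sq_to_K,
      Complex.norm_real, Real.norm_of_nonneg (Real.sqrt_nonneg _), RCLike.real_smul_eq_coe_mul,
      ← map_pow, ← map_mul, Real.sq_sqrt hN.le]
    field_simp
    simp
  · have hdisj : min (((i : ℝ) + 1) / N) (((j : ℝ) + 1) / N)
        ≤ max ((i : ℝ) / N) ((j : ℝ) / N) := by
      rcases lt_or_gt_of_ne hij with h | h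
      · have h' : (i : ℝ) + 1 ≤ j := by exact_mod_cast h
        exact (min_le_left _ _).trans
          ((div_le_div_of_nonneg_right h' hN.le).trans (le_max_right _ _))
      · have h' : (j : ℝ) + 1 ≤ i := by exact_mod_cast h
        exact (min_le_right _ _).trans
          ((div_le_div_of_nonneg_right h' hN.le).trans (le_max_left _ _))
    rw [measureReal_def, μ01_Icc (le_max_of_le_left (grid_nonneg N i))
      (min_le_of_left_le (grid_succ_le_one N i)), ENNReal.ofReal_eq_zero.mpr (by linarith)]
    simp

lemma inner_Wmap_matVec_Wstar (N : ℕ) (M : Matrix (Fin N) (Fin N) ℂ) (u v : Lp ℂ 2 μ01) :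
    ⟪v, Wmap N (matVec M (Wstar N u))⟫_ℂ
      = ∑ i, ∑ j, M i j * ⟪eN N j, u⟫_ℂ * ⟪v, eN N i⟫_ℂ := by
  simp [Wmap, matVec, Wstar, inner_sum, inner_smul_right, Matrix.mulVec, dotProduct,
    Finset.mul_sum, mul_comm, mul_left_comm]

lemma inner_eq_intervalIntegral_of_isVolterra {V : Lp ℂ 2 μ01 → Lp ℂ 2 μ01} (hV : IsVolterra V)
    (u v : Lp ℂ 2 μ01) :
    ⟪v, V u⟫_ℂ = ∫ x in (0 : ℝ)..1, conj ((v : ℝ → ℂ) x) * ∫ t in (0 : ℝ)..x, (u : ℝ → ℂ) t := by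
  rw [L2.inner_def, ← integral_μ01]
  refine integral_congr_ae ?_
  filter_upwards [hV u] with x hx
  rw [hx, RCLike.inner_apply, mul_comm]

lemma inner_Wmap_TM (N : ℕ) (u v : Lp ℂ 2 μ01) :
    ⟪v, Wmap N (matVec (TM N) (Wstar N u))⟫_ℂ
      = ∑ k ∈ Finset.range N, (∫ x in (k / N : ℝ)..((k + 1) / N), conj ((v : ℝ → ℂ) x))
          * ∫ t in (0 : ℝ)..((k + 1) / N), (u : ℝ → ℂ) t := by
  rw [inner_Wmap_matVec_Wstar, ← Fin.sum_univ_eq_sum_range fun k : ℕ =>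
    (∫ x in (k / N : ℝ)..((k + 1) / N), conj ((v : ℝ → ℂ) x))
      * ∫ t in (0 : ℝ)..((k + 1) / N), (u : ℝ → ℂ) t]
  refine Finset.sum_congr rfl fun i _ => ?_
  have hN : (0 : ℝ) < N := by exact_mod_cast i.pos
  have hprimitive : ∑ j : Fin N,
      (if j ≤ i then ∫ x in (j / N : ℝ)..((j + 1) / N), (u : ℝ → ℂ) x else 0)
        = ∫ t in (0 : ℝ)..((i + 1) / N), (u : ℝ → ℂ) t := by
    have hmem : ∀ k ≤ (i : ℕ) + 1, (k / N : ℝ) ∈ Set.Icc (0 : ℝ) 1 := fun k hk =>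
      ⟨by positivity, (div_le_one hN).mpr (by exact_mod_cast hk.trans i.isLt)⟩
    rw [Fin.sum_ite_le_eq_sum_range i fun k : ℕ =>
      ∫ x in (k / N : ℝ)..((k + 1) / N), (u : ℝ → ℂ) x]
    simpa using intervalIntegral.sum_integral_adjacent_intervals (a := fun k : ℕ => (k / N : ℝ))
      fun k hk => intervalIntegrable_Lp_μ01 u (hmem k hk.le) (hmem (k + 1) hk)
  have hsqrt : (Real.sqrt N : ℂ) * Real.sqrt N = N := by
    rw [← Complex.ofReal_mul, Real.mul_self_sqrt hN.le, Complex.ofReal_natCast]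
  simp only [TM, Matrix.of_apply, inner_eN, inner_eN_right, ite_mul, zero_mul]
  rw [← hprimitive, Finset.mul_sum]
  refine Finset.sum_congr rfl fun j _ => ?_
  split_ifs
  · have hN' : (N : ℂ) ≠ 0 := by exact_mod_cast hN.ne'
    field_simp
    linear_combination (∫ x in (i / N : ℝ)..((i + 1) / N), conj ((v : ℝ → ℂ) x))
      * (∫ x in (j / N : ℝ)..((j + 1) / N), (u : ℝ → ℂ) x) * hsqrt
  · simp

lemma norm_inner_Wmap_TM_sub_le {V : Lp ℂ 2 μ01 → Lp ℂ 2 μ01} (hV : IsVolterra V)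
    (u v : Lp ℂ 2 μ01) {N : ℕ} (hN : 0 < N) :
    ‖⟪v, Wmap N (matVec (TM N) (Wstar N u))⟫_ℂ - ⟪v, V u⟫_ℂ‖
      ≤ ‖u‖ / Real.sqrt N * ∫ x in (0 : ℝ)..1, ‖(v : ℝ → ℂ) x‖ := by
  have hN : (0 : ℝ) < N := by exact_mod_cast hN
  have hgrid : Monotone fun k : ℕ => (k / N : ℝ) := fun k l hkl =>
    div_le_div_of_nonneg_right (by exact_mod_cast hkl) hN.le
  have hmem : ∀ k ≤ N, (k / N : ℝ) ∈ Set.Icc (0 : ℝ) 1 := fun k hk =>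
    ⟨by positivity, (div_le_one hN).mpr (by exact_mod_cast hk)⟩
  have hε : ∀ k < N, ∀ x ∈ Set.Icc (k / N : ℝ) ((k + 1 : ℕ) / N),
      ‖(∫ t in (0 : ℝ)..((k + 1 : ℕ) / N), (u : ℝ → ℂ) t) - ∫ t in (0 : ℝ)..x, (u : ℝ → ℂ) t‖
        ≤ ‖u‖ / Real.sqrt N := by
    intro k hk x hx
    have hlen : ((k + 1 : ℕ) / N : ℝ) - x ≤ 1 / N := by
      rw [Nat.cast_succ, add_div]; linarith [hx.1]
    calc _ ≤ Real.sqrt (((k + 1 : ℕ) / N : ℝ) - x) * ‖u‖ :=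
          norm_primitive_sub_le u ((hmem k hk.le).1.trans hx.1) hx.2 (hmem (k + 1) hk).2
      _ ≤ Real.sqrt (1 / N) * ‖u‖ := by gcongr
      _ = ‖u‖ / Real.sqrt N := by rw [one_div, Real.sqrt_inv, div_eq_mul_inv, mul_comm]
  have hv : IntegrableOn (fun x => conj ((v : ℝ → ℂ) x)) (Set.uIcc 0 1) := by
    rw [Set.uIcc_of_le zero_le_one]; exact (Lp.memLp v).star.integrable one_le_two
  have hu : IntegrableOn (u : ℝ → ℂ) (Set.uIcc 0 1) := by
    rw [Set.uIcc_of_le zero_le_one]; exact (Lp.memLp u).integrable one_le_two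
  have h := norm_sum_integral_mul_sub_integral_mul_le hgrid (n := N)
    (by simpa [hN.ne'] using hv.intervalIntegrable)
    (by simpa [hN.ne'] using intervalIntegral.continuousOn_primitive_interval hu) hε
  simp only [Nat.cast_zero, zero_div, div_self hN.ne', Nat.cast_succ] at h
  rw [inner_Wmap_TM, inner_eq_intervalIntegral_of_isVolterra hV]
  simpa using h

theorem tendsto_inner_Wmap_TM {V : Lp ℂ 2 μ01 → Lp ℂ 2 μ01} (hV : IsVolterra V)
    (u v : Lp ℂ 2 μ01) :
    Tendsto (fun N => ⟪v, Wmap N (matVec (TM N) (Wstar N u))⟫_ℂ) atTop (nhds ⟪v, V u⟫_ℂ) := by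
  rw [← tendsto_sub_nhds_zero_iff]
  refine squeeze_zero_norm'
    (eventually_atTop.mpr ⟨1, fun N hN => norm_inner_Wmap_TM_sub_le hV u v hN⟩) ?_
  simpa using ((tendsto_const_nhds (x := ‖u‖)).div_atTop
    (Real.tendsto_sqrt_atTop.comp tendsto_natCast_atTop_atTop)).mul_const _

instance (N : ℕ) : Fintype (LTri N) := inferInstanceAs (Fintype {p : Fin N × Fin N // p.2 ≤ p.1})

lemma sum_LTri_eq_sum_filter {M : Type*} [AddCommMonoid M] (N : ℕ) (f : Fin N × Fin N → M) :
    ∑ p : LTri N, f p.1 = ∑ p with p.2 ≤ p.1, f p :=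
  (Finset.sum_subtype _ (by simp) f).symm

def entryWeight (N : ℕ) (u v : Lp ℂ 2 μ01) (p : Fin N × Fin N) : ℂ :=
  (N : ℂ)⁻¹ * ⟪eN N p.2, u⟫_ℂ * ⟪v, eN N p.1⟫_ℂ

lemma inner_Wmap_XM_sub_TM {Ω : Type*} (N : ℕ) (Y : Fin N → Fin N → Ω → ℝ)
    (hzero : ∀ i j, i < j → ∀ ω, Y i j ω = 0) (ω : Ω) (u v : Lp ℂ 2 μ01) :
    ⟪v, Wmap N (matVec (XM N Y ω) (Wstar N u))⟫_ℂ - ⟪v, Wmap N (matVec (TM N) (Wstar N u))⟫_ℂ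
      = ∑ p : LTri N, entryWeight N u v p.1 * ((Y p.1.1 p.1.2 ω - 1 : ℝ) : ℂ) := by
  set g : Fin N × Fin N → ℂ := fun p =>
    entryWeight N u v p * ((Y p.1 p.2 ω - if p.2 ≤ p.1 then 1 else 0 : ℝ) : ℂ)
  have hg : ∀ p, g p ≠ 0 → p.2 ≤ p.1 := fun p hp => by
    by_contra h
    simp [g, h, hzero p.1 p.2 (not_le.mp h)] at hp
  calc _ = ∑ p, g p := by
        rw [inner_Wmap_matVec_Wstar, inner_Wmap_matVec_Wstar, ← Finset.sum_sub_distrib,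
          Fintype.sum_prod_type]
        refine Finset.sum_congr rfl fun i _ => ?_
        rw [← Finset.sum_sub_distrib]
        refine Finset.sum_congr rfl fun j _ => ?_
        simp only [g, entryWeight, XM, TM, Matrix.of_apply]
        split_ifs <;> push_cast <;> ring
    _ = _ := by
        rw [← Finset.sum_filter_of_ne fun p _ => hg p, ← sum_LTri_eq_sum_filter]
        exact Finset.sum_congr rfl fun p _ => by simp [g, p.2]

lemma sum_LTri_norm_sq_entryWeight_le (N : ℕ) (u v : Lp ℂ 2 μ01) :
    ∑ p : LTri N, ‖entryWeight N u v p.1‖ ^ 2 ≤ ‖u‖ ^ 2 * ‖v‖ ^ 2 / N ^ 2 := by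
  have hu : ∑ j, ‖⟪eN N j, u⟫_ℂ‖ ^ 2 ≤ ‖u‖ ^ 2 := (eN_orthonormal N).sum_inner_products_le u
  have hv : ∑ i, ‖⟪v, eN N i⟫_ℂ‖ ^ 2 ≤ ‖v‖ ^ 2 := by
    simpa only [norm_inner_symm] using (eN_orthonormal N).sum_inner_products_le v
  rw [sum_LTri_eq_sum_filter N fun p => ‖entryWeight N u v p‖ ^ 2]
  calc _ ≤ ∑ p, ‖entryWeight N u v p‖ ^ 2 :=
        Finset.sum_le_sum_of_subset_of_nonneg (Finset.filter_subset _ _)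
          fun _ _ _ => sq_nonneg _
    _ = (∑ j, ‖⟪eN N j, u⟫_ℂ‖ ^ 2) * (∑ i, ‖⟪v, eN N i⟫_ℂ‖ ^ 2) / N ^ 2 := by
        rw [Fintype.sum_prod_type, Finset.sum_mul_sum, Finset.sum_comm, Finset.sum_div]
        refine Finset.sum_congr rfl fun i _ => ?_
        rw [Finset.sum_div]
        refine Finset.sum_congr rfl fun j _ => ?_
        rw [entryWeight, norm_mul, norm_mul, norm_inv, Complex.norm_natCast]
        ring
    _ ≤ ‖u‖ ^ 2 * ‖v‖ ^ 2 / N ^ 2 := by gcongr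

lemma summable_sum_LTri_norm_sq_entryWeight_mul {d : ℝ} (hd1 : d < 1) (u v : Lp ℂ 2 μ01)
    {σ : (N : ℕ) → LTri N → ℝ} (hσ0 : ∀ N p, 0 ≤ σ N p) (hσ : ∀ N p, σ N p ≤ (N : ℝ) ^ d) :
    Summable fun N => ∑ p : LTri N, ‖entryWeight N u v p.1‖ ^ 2 * σ N p := by
  refine .of_nonneg_of_le (fun N => Finset.sum_nonneg fun p _ => by have := hσ0 N p; positivity)
    (fun N => ?_)
    ((Real.summable_nat_rpow.mpr (by linarith : d - 2 < -1)).mul_left (‖u‖ ^ 2 * ‖v‖ ^ 2))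
  calc _ ≤ ∑ p : LTri N, ‖entryWeight N u v p.1‖ ^ 2 * (N : ℝ) ^ d :=
        Finset.sum_le_sum fun p _ => by gcongr; exact hσ N p
    _ ≤ ‖u‖ ^ 2 * ‖v‖ ^ 2 / N ^ 2 * (N : ℝ) ^ d := by
        rw [← Finset.sum_mul]; gcongr; exact sum_LTri_norm_sq_entryWeight_le N u v
    _ = ‖u‖ ^ 2 * ‖v‖ ^ 2 * (N : ℝ) ^ (d - 2) := by
        rcases N.eq_zero_or_pos with rfl | hN
        · simp [Real.zero_rpow (by linarith : d - 2 ≠ 0)]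
        · rw [Real.rpow_sub (by exact_mod_cast hN), Real.rpow_two]; ring

theorem wot_like_convergence_polynomially_sparse_bernoulli_general
    {Ω : Type*} [MeasureSpace Ω] [IsProbabilityMeasure (ℙ : Measure Ω)]
    (X : (N : ℕ) → Fin N → Fin N → Ω → ℝ)
    (d : ℝ) (hd1 : d < 1)
    (hmeas : ∀ N (i j : Fin N), Measurable (X N i j))
    (hzero : ∀ N (i j : Fin N), i < j → ∀ ω, X N i j ω = 0)
    (hindep : ∀ N, iIndepFun
      (fun p : LTri N => X N p.1.1 p.1.2) ℙ)
    (hvals : ∀ N (i j : Fin N), j ≤ i → ∀ ω,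
      X N i j ω = (N : ℝ) ^ d ∨ X N i j ω = 0)
    (hprob : ∀ N (i j : Fin N), j ≤ i →
      ℙ {ω | X N i j ω = (N : ℝ) ^ d} = ENNReal.ofReal ((N : ℝ) ^ (-d)))
    (V : Lp ℂ 2 μ01 → Lp ℂ 2 μ01) (hV : IsVolterra V)
    (u v : Lp ℂ 2 μ01) :
    ∀ᵐ ω ∂ℙ, Tendsto
      (fun N => (@inner ℂ _ _ v
        (Wmap N (matVec (XM N (X N) ω) (Wstar N u))) : ℂ))
      atTop (nhds (@inner ℂ _ _ v (V u))) := by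
  have hmoments (N : ℕ) (p : LTri N) :
      ∫ ω, X N p.1.1 p.1.2 ω = 1 ∧ Var[X N p.1.1 p.1.2; ℙ] ≤ (N : ℝ) ^ d :=
    integral_eq_one_and_variance_le_rpow (by exact_mod_cast p.1.1.pos) (hmeas N _ _)
      (hvals N _ _ p.2) (hprob N _ _ p.2)
  have hnoise := ae_tendsto_sum_mul_sub_integral (X := fun N (p : LTri N) => X N p.1.1 p.1.2)
    (fun N p => memLp_of_forall_eq_or_eq_zero (hmeas N _ _) (hvals N _ _ p.2) 2)
    (fun N _ _ hpq => (hindep N).indepFun hpq) (fun N p => entryWeight N u v p.1)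
    (summable_sum_LTri_norm_sq_entryWeight_mul hd1 u v (fun _ _ => variance_nonneg _ _)
      fun N p => (hmoments N p).2)
  filter_upwards [hnoise] with ω hω
  have h := (tendsto_inner_Wmap_TM hV u v).add hω
  rw [add_zero] at h
  refine h.congr fun N => ?_
  rw [← eq_sub_iff_add_eq', inner_Wmap_XM_sub_TM N (X N) (hzero N) ω u v]
  exact Finset.sum_congr rfl fun p _ => by rw [(hmoments N p).1]

/-- **Sparse Bernoulli example, polynomially sparse case.** Let the (unscaled)
lower-triangular entries `X_{i,j}^N` be i.i.d., equal to `1/δ(N) = N^d` with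
probability `δ(N) = N^{-d}` and `0` otherwise, where `0 < d < 1` (so the
entries of `X_N = (1/N)(X_{i,j}^N)` equal `1/(δ(N)N)` with probability `δ(N)`).
Then for all `u, v ∈ L²[0,1]`, almost surely
`⟨W_N X_N W_N^*(u), v⟩ → ⟨V(u), v⟩`. -/
theorem wot_like_convergence_polynomially_sparse_bernoulli
    {Ω : Type*} [MeasureSpace Ω] [IsProbabilityMeasure (ℙ : Measure Ω)]
    (X : (N : ℕ) → Fin N → Fin N → Ω → ℝ)
    (d : ℝ) (hd0 : 0 < d) (hd1 : d < 1)
    (hmeas : ∀ N (i j : Fin N), Measurable (X N i j))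
    (hzero : ∀ N (i j : Fin N), i < j → ∀ ω, X N i j ω = 0)
    (hindep : ∀ N, iIndepFun
      (fun p : LTri N => X N p.1.1 p.1.2) ℙ)
    (hvals : ∀ N (i j : Fin N), j ≤ i → ∀ ω,
      X N i j ω = (N : ℝ) ^ d ∨ X N i j ω = 0)
    (hprob : ∀ N (i j : Fin N), j ≤ i →
      ℙ {ω | X N i j ω = (N : ℝ) ^ d} = ENNReal.ofReal ((N : ℝ) ^ (-d)))
    (V : Lp ℂ 2 μ01 → Lp ℂ 2 μ01) (hV : IsVolterra V)
    (u v : Lp ℂ 2 μ01) :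
    ∀ᵐ ω ∂ℙ, Tendsto
      (fun N => (@inner ℂ _ _ v
        (Wmap N (matVec (XM N (X N) ω) (Wstar N u))) : ℂ))
      atTop (nhds (@inner ℂ _ _ v (V u))) :=
  wot_like_convergence_polynomially_sparse_bernoulli_general X d hd1 hmeas hzero hindep hvals hprob
    V hV u v

end
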